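/- For all real numbers y and z, in the ring of formal power series in t over ℝ one has Σ_{n=0}^{∞} C(y+n(z+1), n) · (-t(1+t)^z)^n = (1+t)^{-y} / (1 + t(z+1)). -/

import Mathlib

open Finset PowerSeries

/-- Generalized binomial coefficient `C(x, k) = x(x-1)⋯(x-k+1)/k!` for real `x`. -/
noncomputable def gchoose (x : ℝ) (k : ℕ) : ℝ :=
  (∏ i ∈ Finset.range k, (x - i)) / (Nat.factorial k)

/-- The binomial series `(1+t)^x = Σ C(x,k) t^k` as a formal power series. -/
noncomputable def binomSeries (x : ℝ) : PowerSeries ℝ :=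
  PowerSeries.mk fun k => gchoose x k

/-! Write `w = -t(1+t)^z`, `U = 1 + (z+1)t`, `B_r = (1+t)^r` and `f_y = Σ C(y+n(z+1), n) X^n`.
Both `S_y = f_y(w)` and `Q_y = B_{-y} / U` solve
`d/dt (G_y - (z+1) w G_{y+z}) = -y B_{z-1} U G_{y+z}`.
For `S_y` this is the absorption identity `n C(a, n) = a C(a-1, n-1)`, which gives
`d/dX (f_y - (z+1) X f_{y+z}) = y f_{y+z}`, pushed through the chain rule with `w' = -B_{z-1} U`;
for `Q_y` both sides of the equation reduce to `-y B_{-y-1}`. In the difference `E_y` of two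
solutions, the `t^m`-coefficient of `E_y` is fixed by the lower coefficients of `E_{y+z}`, so
`E` vanishes once its constant terms do, and both `S_y` and `Q_y` have constant term `1`. -/

theorem gchoose_eq_choose (x : ℝ) (k : ℕ) : gchoose x k = Ring.choose x k := by
  rw [Ring.choose_eq_smul, gchoose, ← descPochhammer_eval_eq_prod_range,
    ← Polynomial.aeval_eq_smeval, ← descPochhammer_map (algebraMap ℤ ℝ),
    Polynomial.aeval_def, Polynomial.eval_map, smul_eq_mul, div_eq_inv_mul]

theorem binomSeries_eq_binomialSeries (x : ℝ) :
    binomSeries x = PowerSeries.binomialSeries ℝ x := by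
  ext k
  simp [binomSeries, gchoose_eq_choose]

theorem Ring.succ_mul_choose_succ {R : Type*} [CommRing R] [BinomialRing R] (r : R) (k : ℕ) :
    (k + 1 : R) * Ring.choose r (k + 1) = r * Ring.choose (r - 1) k := by
  have h := Ring.choose_smul_choose r (Nat.le_add_left 1 k)
  simp only [Nat.choose_one_right, Ring.choose_one_right, Nat.add_sub_cancel, nsmul_eq_mul] at h
  push_cast at h
  exact h

namespace PowerSeries

section BinomialSeries

variable {R A : Type*} [CommRing R] [BinomialRing R] [CommRing A] [Algebra R A]

theorem derivative_binomialSeries (r : R) :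
    d⁄dX A (binomialSeries A r) = r • binomialSeries A (r - 1) := by
  ext n
  rw [coeff_derivative, coeff_smul, binomialSeries_coeff, binomialSeries_coeff, smul_smul,
    ← Ring.succ_mul_choose_succ]
  simp [Algebra.smul_def, mul_comm]

theorem binomialSeries_one : binomialSeries A (1 : R) = 1 + X := by
  simpa using binomialSeries_nat (R := R) (A := A) 1

end BinomialSeries

theorem coeff_subst_eq_sum_range {R : Type*} [CommRing R] {a : R⟦X⟧}
    (ha : constantCoeff a = 0) (f : R⟦X⟧) (m : ℕ) :
    coeff m (f.subst a) = ∑ n ∈ range (m + 1), coeff n f * coeff m (a ^ n) := by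
  rw [coeff_subst' (HasSubst.of_constantCoeff_zero' ha)]
  refine finsum_eq_sum_of_support_subset _ fun n hn => ?_
  rw [coe_range, Set.mem_Iio, Nat.lt_succ_iff]
  by_contra! hlt
  have hpow : X ^ n ∣ a ^ n := pow_dvd_pow_of_dvd (X_dvd_iff.mpr ha) n
  exact hn (show coeff n f • coeff m (a ^ n) = 0 by
    rw [smul_eq_mul, X_pow_dvd_iff.mp hpow m hlt, mul_zero])

theorem eq_zero_of_derivative_sub_mul_shift {R α : Type*} [CommRing R] [IsDomain R]
    [CharZero R] {σ : α → α} {W : R⟦X⟧} {P E : α → R⟦X⟧} (hW : constantCoeff W = 0)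
    (hE₀ : ∀ a, constantCoeff (E a) = 0)
    (hE : ∀ a, d⁄dX R (E a - W * E (σ a)) = P a * E (σ a)) (a : α) : E a = 0 := by
  suffices h : ∀ m a, X ^ m ∣ E a from
    ext fun m => by simpa using X_pow_dvd_iff.mp (h (m + 1) a) m m.lt_succ_self
  intro m
  induction m with
  | zero => simp
  | succ m ih =>
    intro a
    have hm : coeff m (E a) = 0 := by
      cases m with
      | zero => simpa using hE₀ a
      | succ k =>
        have hWE : X ^ (k + 2) ∣ W * E (σ a) :=
          pow_succ' (X : R⟦X⟧) (k + 1) ▸ mul_dvd_mul (X_dvd_iff.mpr hW) (ih (σ a))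
        have hd : coeff k (d⁄dX R (E a - W * E (σ a))) = 0 := by
          rw [hE]
          exact X_pow_dvd_iff.mp (dvd_mul_of_dvd_right (ih (σ a)) _) k k.lt_succ_self
        rw [coeff_derivative, map_sub, X_pow_dvd_iff.mp hWE (k + 1) (by omega), sub_zero] at hd
        exact (mul_eq_zero.mp hd).resolve_right (by exact_mod_cast k.succ_ne_zero)
    refine X_pow_dvd_iff.mpr fun j hj => ?_
    rcases Nat.lt_succ_iff_lt_or_eq.mp hj with hj | rfl
    · exact X_pow_dvd_iff.mp (ih a) j hj
    · exact hm

section Substitution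

variable {K : Type*} [Field K] [CharZero K]

noncomputable def negXMulBinomialSeries (z : K) : K⟦X⟧ := -(X * binomialSeries K z)

noncomputable def chooseSeries (y z : K) : K⟦X⟧ := mk fun n => Ring.choose (y + n * (z + 1)) n

noncomputable def substChooseSeries (y z : K) : K⟦X⟧ :=
  (chooseSeries y z).subst (negXMulBinomialSeries z)

noncomputable def binomialDivSeries (y z : K) : K⟦X⟧ :=
  binomialSeries K (-y) * (1 + C (z + 1) * X)⁻¹

theorem constantCoeff_negXMulBinomialSeries (z : K) :
    constantCoeff (negXMulBinomialSeries z) = 0 := by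
  simp [negXMulBinomialSeries]

theorem derivative_negXMulBinomialSeries (z : K) :
    d⁄dX K (negXMulBinomialSeries z) = -(binomialSeries K (z - 1) * (1 + C (z + 1) * X)) := by
  have h : binomialSeries K z = binomialSeries K (z - 1) * (1 + X) := by
    rw [← binomialSeries_one (R := K), ← binomialSeries_add, sub_add_cancel]
  rw [negXMulBinomialSeries, map_neg, Derivation.leibniz, derivative_binomialSeries, derivative_X,
    smul_eq_mul, smul_eq_mul, smul_eq_C_mul, h, map_add, map_one]
  ring

theorem derivative_chooseSeries_sub (y z : K) :
    d⁄dX K (chooseSeries y z - C (z + 1) * (X * chooseSeries (y + z) z)) =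
      C y * chooseSeries (y + z) z := by
  ext n
  rw [coeff_derivative, map_sub, coeff_C_mul, coeff_succ_X_mul, coeff_C_mul]
  simp only [chooseSeries, coeff_mk]
  have h := Ring.succ_mul_choose_succ (y + (n + 1 : ℕ) * (z + 1)) n
  rw [show y + ((n + 1 : ℕ) : K) * (z + 1) - 1 = y + z + n * (z + 1) by push_cast; ring] at h
  push_cast at h ⊢
  linear_combination h

theorem derivative_substChooseSeries_sub (y z : K) :
    d⁄dX K (substChooseSeries y z -
        C (z + 1) * (negXMulBinomialSeries z * substChooseSeries (y + z) z)) =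
      -(C y * (binomialSeries K (z - 1) * (1 + C (z + 1) * X) * substChooseSeries (y + z) z)) := by
  have hw := HasSubst.of_constantCoeff_zero' (constantCoeff_negXMulBinomialSeries z)
  have h : substChooseSeries y z -
        C (z + 1) * (negXMulBinomialSeries z * substChooseSeries (y + z) z) =
      (chooseSeries y z - C (z + 1) * (X * chooseSeries (y + z) z)).subst
        (negXMulBinomialSeries z) := by
    rw [← smul_eq_C_mul, ← smul_eq_C_mul, subst_sub hw, subst_smul hw, subst_mul hw, subst_X hw]
    rfl
  rw [h, derivative_subst hw, derivative_chooseSeries_sub, ← smul_eq_C_mul, subst_smul hw,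
    derivative_negXMulBinomialSeries, smul_eq_C_mul, substChooseSeries]
  ring

theorem derivative_binomialDivSeries_sub (y z : K) :
    d⁄dX K (binomialDivSeries y z -
        C (z + 1) * (negXMulBinomialSeries z * binomialDivSeries (y + z) z)) =
      -(C y * (binomialSeries K (z - 1) * (1 + C (z + 1) * X) * binomialDivSeries (y + z) z)) := by
  have hU : (1 + C (z + 1) * X) * (1 + C (z + 1) * X)⁻¹ = 1 :=
    PowerSeries.mul_inv_cancel _ (by simp)
  have hB : binomialSeries K (-y) = binomialSeries K z * binomialSeries K (-(y + z)) := by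
    rw [← binomialSeries_add]; ring_nf
  have hB' :
      binomialSeries K (-y - 1) = binomialSeries K (z - 1) * binomialSeries K (-(y + z)) := by
    rw [← binomialSeries_add]; ring_nf
  have h : binomialDivSeries y z -
      C (z + 1) * (negXMulBinomialSeries z * binomialDivSeries (y + z) z) =
      binomialSeries K (-y) := by
    rw [binomialDivSeries, binomialDivSeries, negXMulBinomialSeries, hB]
    linear_combination (binomialSeries K z * binomialSeries K (-(y + z))) * hU
  rw [h, derivative_binomialSeries, hB', smul_eq_C_mul, binomialDivSeries, map_neg]
  linear_combination (C y * binomialSeries K (z - 1) * binomialSeries K (-(y + z))) * hU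

theorem substChooseSeries_eq_binomialDivSeries (y z : K) :
    substChooseSeries y z = binomialDivSeries y z := by
  refine sub_eq_zero.mp (eq_zero_of_derivative_sub_mul_shift (σ := (· + z))
    (W := C (z + 1) * negXMulBinomialSeries z)
    (P := fun y => -(C y * (binomialSeries K (z - 1) * (1 + C (z + 1) * X))))
    (E := fun y => substChooseSeries y z - binomialDivSeries y z) ?_ ?_ ?_ y)
  · simp [constantCoeff_negXMulBinomialSeries]
  · intro y
    rw [map_sub, sub_eq_zero, ← coeff_zero_eq_constantCoeff_apply, substChooseSeries,
      coeff_subst_eq_sum_range (constantCoeff_negXMulBinomialSeries z)]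
    simp [chooseSeries, binomialDivSeries, constantCoeff_inv]
  · intro y
    rw [show ∀ S Q S' Q' : K⟦X⟧,
        S - Q - C (z + 1) * negXMulBinomialSeries z * (S' - Q') =
          (S - C (z + 1) * (negXMulBinomialSeries z * S')) -
            (Q - C (z + 1) * (negXMulBinomialSeries z * Q')) from fun _ _ _ _ => by ring,
      map_sub, derivative_substChooseSeries_sub, derivative_binomialDivSeries_sub]
    ring

end Substitution

end PowerSeries

/-- `Σ_{n≥0} C(y+n(z+1), n) (-t(1+t)^z)^n = (1+t)^{-y}/(1+t(z+1))`, expressed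
coefficientwise: terms with `n > m` do not contribute to the coefficient of `t^m`. -/
theorem binom_series_substitution (y z : ℝ) (m : ℕ) :
    ∑ n ∈ Finset.range (m + 1),
        gchoose (y + n * (z + 1)) n *
          PowerSeries.coeff m ((-(PowerSeries.X * binomSeries z)) ^ n) =
      PowerSeries.coeff m
        (binomSeries (-y) * (1 + PowerSeries.C (z + 1) * PowerSeries.X)⁻¹) := by
  have h := congrArg (coeff m) (substChooseSeries_eq_binomialDivSeries y z)
  rw [substChooseSeries, coeff_subst_eq_sum_range (constantCoeff_negXMulBinomialSeries z)] at h
  simpa [chooseSeries, binomialDivSeries, negXMulBinomialSeries, gchoose_eq_choose,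
    binomSeries_eq_binomialSeries] using h
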